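/- Let μ : ℝ → ℝ be a continuous nonnegative function, let k ≥ 1 be an integer, and fix t ≥ 0. Then the functional λ ↦ f_k(t; λ, μ) is concave on the set of continuous nonnegative functions: for all continuous nonnegative λ_1, λ_2 : ℝ → ℝ and all α ∈ (0,1), f_k(t; α·λ_1 + (1-α)·λ_2, μ) ≥ α · f_k(t; λ_1, μ) + (1-α) · f_k(t; λ_2, μ). -/

import Mathlib

/-!
Integrating by parts in `τ` (with `λ e^{-Λ}` the derivative of `e^{-Λ}`, where `Λ(τ) = ∫_τ^t λ`)
gives
`(k-1)! f_k(t; λ, μ) = Γ(k, 0) - Γ(k, M(0)) e^{-Λ(0)} - ∫_0^t μ(τ) M(τ)^{k-1} e^{-M(τ)} e^{-Λ(τ)} dτ`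
with `M(τ) = ∫_τ^t μ`. For `μ ≥ 0` the weights `Γ(k, M(0))` and `μ M^{k-1} e^{-M}` are nonnegative
and each `e^{-Λ(τ)}` is the convex function `exp` of a linear functional of `λ`, so `f_k` is an
affine functional minus a convex one.
-/

open MeasureTheory Real Set Filter Topology intervalIntegral

/-- The upper incomplete Gamma function `Γ(k, x) = ∫_x^∞ s^{k-1} e^{-s} ds`. -/
noncomputable def uGamma (k : ℕ) (x : ℝ) : ℝ :=
  ∫ s in Set.Ioi x, s ^ (k - 1) * Real.exp (-s)

/-- `f_k(t; λ, μ) = (1/(k-1)!) ∫_0^t λ(τ) exp(-∫_τ^t λ) Γ(k, ∫_τ^t μ) dτ`. -/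
noncomputable def fk (k : ℕ) (lam mu : ℝ → ℝ) (t : ℝ) : ℝ :=
  (1 / (Nat.factorial (k - 1) : ℝ)) *
    ∫ τ in (0:ℝ)..t,
      lam τ * Real.exp (-∫ x in τ..t, lam x) * uGamma k (∫ x in τ..t, mu x)

lemma integrableOn_pow_mul_exp_neg_Ioi (n : ℕ) (x : ℝ) :
    IntegrableOn (fun s : ℝ => s ^ n * exp (-s)) (Ioi x) := by
  have h_Ioi : IntegrableOn (fun s : ℝ => s ^ n * exp (-s)) (Ioi 0) := by
    refine (GammaIntegral_convergent (s := n + 1) (by positivity)).congr_fun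
      (fun s _ => ?_) measurableSet_Ioi
    simp only [add_sub_cancel_right, rpow_natCast, mul_comm]
  have h_Ioc : IntegrableOn (fun s : ℝ => s ^ n * exp (-s)) (Ioc x 0) :=
    (by fun_prop : Continuous fun s : ℝ => s ^ n * exp (-s)).integrableOn_Ioc
  exact (h_Ioc.union h_Ioi).mono_set fun s hs => (le_or_gt s 0).imp (fun h => ⟨hs, h⟩) id

lemma uGamma_eq_sub_integral (k : ℕ) (x : ℝ) :
    uGamma k x = uGamma k 0 - ∫ s in (0:ℝ)..x, s ^ (k - 1) * exp (-s) := by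
  rw [← integral_Ioi_sub_Ioi' (integrableOn_pow_mul_exp_neg_Ioi _ 0)
    (integrableOn_pow_mul_exp_neg_Ioi _ x), uGamma, uGamma, sub_sub_cancel]

lemma hasDerivAt_uGamma (k : ℕ) (x : ℝ) :
    HasDerivAt (uGamma k) (-(x ^ (k - 1) * exp (-x))) x := by
  have hc : Continuous fun s : ℝ => s ^ (k - 1) * exp (-s) := by fun_prop
  refine (integral_hasDerivAt_right (hc.intervalIntegrable 0 x)
    hc.stronglyMeasurable.stronglyMeasurableAtFilter hc.continuousAt).const_sub _
    |>.congr_of_eventuallyEq (Eventually.of_forall fun y => uGamma_eq_sub_integral k y)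

lemma uGamma_nonneg (k : ℕ) {x : ℝ} (hx : 0 ≤ x) : 0 ≤ uGamma k x :=
  setIntegral_nonneg measurableSet_Ioi fun s hs => by
    have : 0 ≤ s := hx.trans (le_of_lt hs)
    positivity

lemma hasDerivAt_integral_left_of_continuous {f : ℝ → ℝ} (hf : Continuous f) (t τ : ℝ) :
    HasDerivAt (fun u => ∫ x in u..t, f x) (-f τ) τ :=
  integral_hasDerivAt_left (hf.intervalIntegrable τ t)
    hf.stronglyMeasurable.stronglyMeasurableAtFilter hf.continuousAt

lemma continuous_integral_left {f : ℝ → ℝ} (hf : Continuous f) (t : ℝ) :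
    Continuous fun u => ∫ x in u..t, f x :=
  continuous_iff_continuousAt.2 fun τ => (hasDerivAt_integral_left_of_continuous hf t τ).continuousAt

lemma fk_eq_sub_integral {lam mu : ℝ → ℝ} (hlam : Continuous lam) (hmu : Continuous mu)
    (k : ℕ) (t : ℝ) :
    fk k lam mu t = (1 / (Nat.factorial (k - 1) : ℝ)) *
      (uGamma k 0 - uGamma k (∫ x in (0:ℝ)..t, mu x) * exp (-∫ x in (0:ℝ)..t, lam x)
        - ∫ τ in (0:ℝ)..t, mu τ * ((∫ x in τ..t, mu x) ^ (k - 1) * exp (-∫ x in τ..t, mu x))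
            * exp (-∫ x in τ..t, lam x)) := by
  set M : ℝ → ℝ := fun τ => ∫ x in τ..t, mu x
  set Λ : ℝ → ℝ := fun τ => ∫ x in τ..t, lam x
  have hM := continuous_integral_left hmu t
  have hΛ := continuous_integral_left hlam t
  have hu : ∀ τ ∈ uIcc (0:ℝ) t, HasDerivAt (fun τ => uGamma k (M τ))
      (mu τ * (M τ ^ (k - 1) * exp (-M τ))) τ := fun τ _ =>
    ((hasDerivAt_uGamma k (M τ)).comp τ
      (hasDerivAt_integral_left_of_continuous hmu t τ)).congr_deriv (by ring)
  have hv : ∀ τ ∈ uIcc (0:ℝ) t, HasDerivAt (fun τ => exp (-Λ τ)) (lam τ * exp (-Λ τ)) τ :=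
    fun τ _ => by
      simpa [mul_comm] using
        ((hasDerivAt_integral_left_of_continuous hlam t τ).neg).exp
  have hparts := integral_mul_deriv_eq_deriv_mul hu hv
    ((hmu.mul ((hM.pow _).mul hM.neg.rexp)).intervalIntegrable 0 t)
    ((hlam.mul hΛ.neg.rexp).intervalIntegrable 0 t)
  simp only [M, Λ, integral_same, neg_zero, exp_zero, mul_one] at hparts
  rw [fk, ← hparts]
  congr 1
  exact integral_congr fun τ _ => by ring

lemma convex_setOf_continuous : Convex ℝ {f : ℝ → ℝ | Continuous f} :=
  fun _ hf _ hg a b _ _ _ => (hf.const_smul a).add (hg.const_smul b)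

lemma convexOn_intervalIntegral {E : Type*} [AddCommGroup E] [Module ℝ E] {s : Set E}
    {F : E → ℝ → ℝ} {a b : ℝ} (hab : a ≤ b) (hs : Convex ℝ s)
    (hF : ∀ τ ∈ Icc a b, ConvexOn ℝ s fun f => F f τ)
    (hint : ∀ f ∈ s, IntervalIntegrable (F f) volume a b) :
    ConvexOn ℝ s fun f => ∫ τ in a..b, F f τ := by
  refine ⟨hs, fun f hf g hg α β hα hβ hαβ => ?_⟩
  dsimp only
  calc ∫ τ in a..b, F (α • f + β • g) τ
      ≤ ∫ τ in a..b, (α * F f τ + β * F g τ) :=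
        integral_mono_on hab (hint _ (hs hf hg hα hβ hαβ))
          (((hint f hf).const_mul α).add ((hint g hg).const_mul β))
          fun τ hτ => (hF τ hτ).2 hf hg hα hβ hαβ
    _ = α • (∫ τ in a..b, F f τ) + β • ∫ τ in a..b, F g τ := by
        rw [integral_add ((hint f hf).const_mul α) ((hint g hg).const_mul β),
          intervalIntegral.integral_const_mul, intervalIntegral.integral_const_mul, smul_eq_mul,
          smul_eq_mul]

lemma convexOn_exp_neg_integral (τ t : ℝ) :
    ConvexOn ℝ {f : ℝ → ℝ | Continuous f} fun f => exp (-∫ x in τ..t, f x) := by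
  refine ⟨convex_setOf_continuous, fun f hf g hg α β hα hβ hαβ => ?_⟩
  have hlin : ∫ x in τ..t, (α • f + β • g) x = α * (∫ x in τ..t, f x) + β * ∫ x in τ..t, g x := by
    simp only [Pi.add_apply, Pi.smul_apply, smul_eq_mul]
    rw [integral_add ((hf.const_mul α).intervalIntegrable τ t)
      ((hg.const_mul β).intervalIntegrable τ t), intervalIntegral.integral_const_mul,
      intervalIntegral.integral_const_mul]
  have := convexOn_exp.2 (mem_univ (-∫ x in τ..t, f x)) (mem_univ (-∫ x in τ..t, g x)) hα hβ hαβ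
  simp only [smul_eq_mul] at this ⊢
  rw [hlin]
  convert this using 2
  ring

lemma concaveOn_fk {mu : ℝ → ℝ} (hmuc : Continuous mu) (hmu : ∀ x, 0 ≤ mu x) (k : ℕ)
    {t : ℝ} (ht : 0 ≤ t) :
    ConcaveOn ℝ {lam : ℝ → ℝ | Continuous lam} fun lam => fk k lam mu t := by
  set M : ℝ → ℝ := fun τ => ∫ x in τ..t, mu x
  set w : ℝ → ℝ := fun τ => mu τ * (M τ ^ (k - 1) * exp (-M τ))
  have hM := continuous_integral_left hmuc t
  have hw : Continuous w := hmuc.mul ((hM.pow _).mul hM.neg.rexp)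
  have hw_nonneg : ∀ τ ∈ Icc 0 t, 0 ≤ w τ := fun τ hτ => by
    have := hmu τ
    have : 0 ≤ M τ := integral_nonneg hτ.2 fun x _ => hmu x
    positivity
  have hboundary : ConvexOn ℝ {lam : ℝ → ℝ | Continuous lam}
      fun lam => uGamma k (M 0) • exp (-∫ x in (0:ℝ)..t, lam x) :=
    (convexOn_exp_neg_integral 0 t).smul (uGamma_nonneg k (integral_nonneg ht fun x _ => hmu x))
  have hbulk : ConvexOn ℝ {lam : ℝ → ℝ | Continuous lam}
      fun lam => ∫ τ in (0:ℝ)..t, w τ * exp (-∫ x in τ..t, lam x) :=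
    convexOn_intervalIntegral ht convex_setOf_continuous
      (fun τ hτ => (convexOn_exp_neg_integral τ t).smul (hw_nonneg τ hτ))
      fun lam hlam => (hw.mul (continuous_integral_left hlam t).neg.rexp).intervalIntegrable 0 t
  refine (((concaveOn_const (uGamma k 0) convex_setOf_continuous).sub hboundary).sub hbulk).smul
    (c := 1 / (Nat.factorial (k - 1) : ℝ)) (by positivity) |>.congr fun lam hlam => ?_
  simp only [fk_eq_sub_integral hlam hmuc, Pi.sub_apply, smul_eq_mul, w, M]

theorem stmt3_general (mu : ℝ → ℝ) (hmuc : Continuous mu) (hmu : ∀ x, 0 ≤ mu x)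
    (k : ℕ) (t : ℝ) (ht : 0 ≤ t)
    (lam1 lam2 : ℝ → ℝ) (hc1 : Continuous lam1) (hc2 : Continuous lam2)
    (α : ℝ) (hα : α ∈ Set.Ioo (0:ℝ) 1) :
    fk k (fun x => α * lam1 x + (1 - α) * lam2 x) mu t ≥
      α * fk k lam1 mu t + (1 - α) * fk k lam2 mu t :=
  (concaveOn_fk hmuc hmu k ht).2 hc1 hc2 hα.1.le (sub_nonneg.2 hα.2.le) (add_sub_cancel α 1)

/-- for continuous nonnegative `μ`, integer `k ≥ 1` and fixed `t ≥ 0`,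
the functional `λ ↦ f_k(t; λ, μ)` is concave on the set of continuous nonnegative functions. -/
theorem stmt3 (mu : ℝ → ℝ) (hmuc : Continuous mu) (hmu : ∀ x, 0 ≤ mu x)
    (k : ℕ) (hk : 1 ≤ k) (t : ℝ) (ht : 0 ≤ t)
    (lam1 lam2 : ℝ → ℝ) (hc1 : Continuous lam1) (hc2 : Continuous lam2)
    (h1 : ∀ x, 0 ≤ lam1 x) (h2 : ∀ x, 0 ≤ lam2 x)
    (α : ℝ) (hα : α ∈ Set.Ioo (0:ℝ) 1) :
    fk k (fun x => α * lam1 x + (1 - α) * lam2 x) mu t ≥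
      α * fk k lam1 mu t + (1 - α) * fk k lam2 mu t :=
  stmt3_general mu hmuc hmu k t ht lam1 lam2 hc1 hc2 α hα
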